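/- arXiv:2603.04661 — 2 statements merged into one kernel-verified Lean document; each statement's English description precedes it below -/
import Mathlib

section
/- Let α : [0,T] → ℝ be continuously differentiable with α(0) = 0, α(t) ≥ 0 and α'(t) ≥ 0, let σ > 0 and 0 < ε < 1, and set I(t) = α'(t)/(1+σα(t))^{1-ε} and R(t) = α'(t)/(1+σα(t)). Then ∫₀ᵀ R(t)² dt ≤ (1/(σε))·sup_{t∈[0,T]} I(t). -/
/-!
With `b = 1 + σα`, the square `R² = (α'/b)²` factors as `I · α' b^{-(1+ε)}`. The second factor
is nonnegative with antiderivative `-b^{-ε}/(σε)`, so its integral over `[0,T]` is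
`(1 - b(T)^{-ε})/(σε) ≤ 1/(σε)`; bounding `I` by its supremum gives the claim.
-/

open Set

lemma sq_div_eq_div_rpow_mul_mul_rpow_neg {b : ℝ} (hb : 0 < b) (x ε : ℝ) :
    (x / b) ^ 2 = x / b ^ (1 - ε) * (x * b ^ (-(1 + ε))) := by
  have hsplit : b ^ 2 = b ^ (1 - ε) * b ^ (1 + ε) := by
    rw [← Real.rpow_add hb, ← Real.rpow_natCast]
    norm_num
  rw [Real.rpow_neg hb.le, div_pow, hsplit]
  have h1 : b ^ (1 - ε) ≠ 0 := (Real.rpow_pos_of_pos hb _).ne'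
  have h2 : b ^ (1 + ε) ≠ 0 := (Real.rpow_pos_of_pos hb _).ne'
  field_simp

lemma intervalIntegral_mul_le_sSup_mul {f g : ℝ → ℝ} {a b : ℝ} (hab : a ≤ b)
    (hf : ContinuousOn f (Icc a b)) (hg : ContinuousOn g (Icc a b))
    (hg0 : ∀ t ∈ Icc a b, 0 ≤ g t) :
    ∫ t in a..b, f t * g t ≤ sSup (f '' Icc a b) * ∫ t in a..b, g t := by
  have hbdd : BddAbove (f '' Icc a b) := (isCompact_Icc.image_of_continuousOn hf).bddAbove
  rw [← intervalIntegral.integral_const_mul]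
  refine intervalIntegral.integral_mono_on hab ?_ ?_ fun t ht => ?_
  · exact (hf.mul hg).intervalIntegrable_of_Icc hab
  · exact (continuousOn_const.mul hg).intervalIntegrable_of_Icc hab
  · exact mul_le_mul_of_nonneg_right (le_csSup hbdd ⟨t, ht, rfl⟩) (hg0 t ht)

lemma integral_deriv_mul_one_add_mul_rpow_neg {α α' : ℝ → ℝ} {σ ε a b : ℝ}
    (hσ : σ ≠ 0) (hε : ε ≠ 0) (hab : a ≤ b) (hα' : ContinuousOn α' (Icc a b))
    (hd : ∀ t ∈ Icc a b, HasDerivAt α (α' t) t) (hpos : ∀ t ∈ Icc a b, 0 < 1 + σ * α t) :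
    ∫ t in a..b, α' t * (1 + σ * α t) ^ (-(1 + ε))
      = ((1 + σ * α a) ^ (-ε) - (1 + σ * α b) ^ (-ε)) / (σ * ε) := by
  have hcont : ContinuousOn (fun t => 1 + σ * α t) (Icc a b) :=
    continuousOn_const.add <| continuousOn_const.mul fun t ht =>
      (hd t ht).continuousAt.continuousWithinAt
  have hderiv : ∀ t ∈ uIcc a b, HasDerivAt (fun s => -(1 + σ * α s) ^ (-ε) / (σ * ε))
      (α' t * (1 + σ * α t) ^ (-(1 + ε))) t := by
    intro t ht
    rw [uIcc_of_le hab] at ht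
    have h := ((((hd t ht).const_mul σ).const_add 1).rpow_const
      (p := -ε) (Or.inl (hpos t ht).ne')).neg.div_const (σ * ε)
    refine h.congr_deriv ?_
    rw [show -ε - 1 = -(1 + ε) by ring]
    field_simp
  rw [intervalIntegral.integral_eq_sub_of_hasDerivAt hderiv]
  · ring
  · exact (hα'.mul (hcont.rpow_const fun t ht => Or.inl (hpos t ht).ne')).intervalIntegrable_of_Icc hab

theorem stmt_7_general (σ ε T : ℝ) (hσ : 0 < σ) (hε0 : 0 < ε) (hT : 0 < T)
    (α α' : ℝ → ℝ) (hα' : ContinuousOn α' (Set.Icc 0 T))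
    (hd : ∀ t ∈ Set.Icc (0:ℝ) T, HasDerivAt α (α' t) t)
    (hα0 : α 0 = 0) (hαpos : ∀ t ∈ Set.Icc (0:ℝ) T, 0 ≤ α t)
    (hα'pos : ∀ t ∈ Set.Icc (0:ℝ) T, 0 ≤ α' t) :
    ∫ t in (0:ℝ)..T, (α' t / (1 + σ * α t))^2
      ≤ (1/(σ*ε)) * sSup ((fun t => α' t / (1 + σ * α t) ^ (1 - ε)) '' Set.Icc 0 T) := by
  set b : ℝ → ℝ := fun t => 1 + σ * α t
  have hb : ∀ t ∈ Icc 0 T, 0 < b t := fun t ht => by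
    have := mul_nonneg hσ.le (hαpos t ht)
    simp only [b]; linarith
  have hb_cont : ContinuousOn b (Icc 0 T) :=
    continuousOn_const.add <| continuousOn_const.mul fun t ht =>
      (hd t ht).continuousAt.continuousWithinAt
  have hI_cont : ContinuousOn (fun t => α' t / b t ^ (1 - ε)) (Icc 0 T) :=
    hα'.div (hb_cont.rpow_const fun t ht => Or.inl (hb t ht).ne')
      fun t ht => (Real.rpow_pos_of_pos (hb t ht) _).ne'
  have hI_nonneg : 0 ≤ sSup ((fun t => α' t / b t ^ (1 - ε)) '' Icc 0 T) :=
    Real.sSup_nonneg <| forall_mem_image.2 fun t ht =>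
      div_nonneg (hα'pos t ht) (Real.rpow_nonneg (hb t ht).le _)
  have hweight : ∫ t in (0:ℝ)..T, α' t * b t ^ (-(1 + ε)) ≤ 1 / (σ * ε) := by
    rw [integral_deriv_mul_one_add_mul_rpow_neg hσ.ne' hε0.ne' hT.le hα' hd hb, hα0]
    have := Real.rpow_nonneg (hb T ⟨hT.le, le_rfl⟩).le (-ε)
    simp only [mul_zero, add_zero, Real.one_rpow]
    gcongr
    linarith
  calc ∫ t in (0:ℝ)..T, (α' t / b t) ^ 2
      = ∫ t in (0:ℝ)..T, α' t / b t ^ (1 - ε) * (α' t * b t ^ (-(1 + ε))) :=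
        intervalIntegral.integral_congr fun t ht =>
          sq_div_eq_div_rpow_mul_mul_rpow_neg (hb t (uIcc_of_le hT.le ▸ ht)) _ _
    _ ≤ sSup ((fun t => α' t / b t ^ (1 - ε)) '' Icc 0 T) * (1 / (σ * ε)) := by
        refine (intervalIntegral_mul_le_sSup_mul hT.le hI_cont
          (hα'.mul (hb_cont.rpow_const fun t ht => Or.inl (hb t ht).ne'))
          fun t ht => mul_nonneg (hα'pos t ht) (Real.rpow_nonneg (hb t ht).le _)).trans ?_
        exact mul_le_mul_of_nonneg_left hweight hI_nonneg
    _ = _ := mul_comm _ _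

theorem stmt_7 (σ ε T : ℝ) (hσ : 0 < σ) (hε0 : 0 < ε) (hε1 : ε < 1) (hT : 0 < T)
    (α α' : ℝ → ℝ) (hα' : ContinuousOn α' (Set.Icc 0 T))
    (hd : ∀ t ∈ Set.Icc (0:ℝ) T, HasDerivAt α (α' t) t)
    (hα0 : α 0 = 0) (hαpos : ∀ t ∈ Set.Icc (0:ℝ) T, 0 ≤ α t)
    (hα'pos : ∀ t ∈ Set.Icc (0:ℝ) T, 0 ≤ α' t) :
    ∫ t in (0:ℝ)..T, (α' t / (1 + σ * α t))^2
      ≤ (1/(σ*ε)) * sSup ((fun t => α' t / (1 + σ * α t) ^ (1 - ε)) '' Set.Icc 0 T) :=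
  stmt_7_general σ ε T hσ hε0 hT α α' hα' hd hα0 hαpos hα'pos
end

section
/- Let A ∈ ℝ^{3×3}, B, C appropriate, P = Pᵀ > 0 satisfy the matrix inequality xᵀP(Ax + Bw) - xᵀCᵀw - (3/4)xᵀCᵀCx ≤ 0 for all x ∈ ℝ³, w ∈ ℝ. If X : [0,∞) → ℝ³ solves X' = AX + B·W(CX) where W(v) = 1-(1+v)³, then V(X(t)) = ½X(t)ᵀPX(t) is nonincreasing, and integrating: V(X(τ)) - V(X(0)) + ∫₀^τ (CX(t))²·(3/2 + CX(t))² dt ≤ 0 for all τ > 0. -/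
/-!
Along a solution, `V = ½ xᵀPx` has derivative `Xᵀ P (A X + W(C X) B)` when `P = Pᵀ`.
The Lur'e inequality at `w = W(C X)`, combined with the identity
`-v W(v) - ¾ v² = v² (3/2 + v)²`, bounds it by `-(C X)² (3/2 + C X)² ≤ 0`. Hence `V` is
nonincreasing, and integrating the bound (one-sided fundamental theorem of calculus, which needs
no integrability of `V'`) gives the dissipation inequality.
-/

open Matrix

section QuadraticForm

variable {𝕜 : Type*} [NontriviallyNormedField 𝕜] {m n : Type*} [Fintype n]
  {x y : 𝕜 → n → 𝕜} {x' y' : n → 𝕜} {t : 𝕜}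

theorem HasDerivAt.dotProduct (hx : HasDerivAt x x' t) (hy : HasDerivAt y y' t) :
    HasDerivAt (fun s => x s ⬝ᵥ y s) (x' ⬝ᵥ y t + x t ⬝ᵥ y') t := by
  simp only [_root_.dotProduct, ← Finset.sum_add_distrib]
  exact HasDerivAt.fun_sum fun i _ => (hasDerivAt_pi.1 hx i).mul (hasDerivAt_pi.1 hy i)

theorem HasDerivAt.mulVec (A : Matrix m n 𝕜) (hx : HasDerivAt x x' t) :
    HasDerivAt (fun s => A *ᵥ x s) (A *ᵥ x') t :=
  hasDerivAt_pi.2 fun i => by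
    simpa [Matrix.mulVec] using (hasDerivAt_const t (A i)).dotProduct hx

theorem Matrix.IsSymm.hasDerivAt_dotProduct_mulVec_self {P : Matrix n n 𝕜} (hP : P.IsSymm)
    (hx : HasDerivAt x x' t) :
    HasDerivAt (fun s => x s ⬝ᵥ (P *ᵥ x s)) (2 * (x t ⬝ᵥ (P *ᵥ x'))) t := by
  convert hx.dotProduct (hx.mulVec P) using 1
  rw [dotProduct_mulVec, dotProduct_comm, ← mulVec_transpose, hP.eq]
  ring

end QuadraticForm

theorem cubic_sector_identity (v : ℝ) :
    -v * (1 - (1 + v) ^ 3) - 3 / 4 * v ^ 2 = v ^ 2 * (3 / 2 + v) ^ 2 := by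
  ring

theorem sub_add_integral_nonpos_of_hasDerivAt_le_neg {V V' g : ℝ → ℝ}
    (hV : ∀ t, HasDerivAt V (V' t) t) (hg : Continuous g) (hle : ∀ t, V' t ≤ -g t)
    {a b : ℝ} (hab : a ≤ b) : V b - V a + ∫ t in a..b, g t ≤ 0 := by
  have h := intervalIntegral.sub_le_integral_of_hasDeriv_right_of_le hab
    (fun t _ => (hV t).continuousAt.continuousWithinAt) (fun t _ => (hV t).hasDerivWithinAt)
    (φ := fun t => -g t) hg.neg.integrableOn_Icc fun t _ => hle t
  rw [intervalIntegral.integral_neg] at h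
  linarith

theorem stmt_18_general (A : Matrix (Fin 3) (Fin 3) ℝ) (B C : Fin 3 → ℝ)
    (P : Matrix (Fin 3) (Fin 3) ℝ) (hPsymm : P.IsSymm)
    (hLure : ∀ (x : Fin 3 → ℝ) (w : ℝ),
      x ⬝ᵥ (P *ᵥ (A *ᵥ x + w • B)) - (C ⬝ᵥ x) * w - (3/4) * (C ⬝ᵥ x) ^ 2 ≤ 0)
    (X : ℝ → Fin 3 → ℝ)
    (hX : ∀ i, ∀ t : ℝ, HasDerivAt (fun s => X s i)
      ((A *ᵥ X t + (1 - (1 + C ⬝ᵥ X t) ^ 3) • B) i) t) :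
    AntitoneOn (fun t => (1/2) * (X t ⬝ᵥ (P *ᵥ X t))) (Set.Ici 0) ∧
    ∀ τ : ℝ, 0 < τ →
      (1/2) * (X τ ⬝ᵥ (P *ᵥ X τ)) - (1/2) * (X 0 ⬝ᵥ (P *ᵥ X 0))
        + (∫ t in (0:ℝ)..τ, (C ⬝ᵥ X t) ^ 2 * (3/2 + C ⬝ᵥ X t) ^ 2) ≤ 0 := by
  set W : ℝ → ℝ := fun v => 1 - (1 + v) ^ 3
  set g : ℝ → ℝ := fun t => (C ⬝ᵥ X t) ^ 2 * (3/2 + C ⬝ᵥ X t) ^ 2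
  have hXd : ∀ t, HasDerivAt X (A *ᵥ X t + W (C ⬝ᵥ X t) • B) t :=
    fun t => hasDerivAt_pi.2 fun i => hX i t
  have hV : ∀ t, HasDerivAt (fun s => (1/2) * (X s ⬝ᵥ (P *ᵥ X s)))
      (X t ⬝ᵥ (P *ᵥ (A *ᵥ X t + W (C ⬝ᵥ X t) • B))) t := fun t => by
    simpa using ((hPsymm.hasDerivAt_dotProduct_mulVec_self (hXd t)).const_mul (1/2 : ℝ))
  have hdecay : ∀ t, X t ⬝ᵥ (P *ᵥ (A *ᵥ X t + W (C ⬝ᵥ X t) • B)) ≤ -g t := fun t => by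
    have := hLure (X t) (W (C ⬝ᵥ X t))
    simp only [g, W] at this ⊢
    linarith [cubic_sector_identity (C ⬝ᵥ X t)]
  have hg_nonneg : ∀ t, 0 ≤ g t := fun t => by positivity
  have hg_cont : Continuous g := by
    have : Continuous X := continuous_iff_continuousAt.2 fun t => (hXd t).continuousAt
    fun_prop
  exact ⟨(antitone_of_hasDerivAt_nonpos hV fun t =>
      (hdecay t).trans (neg_nonpos.2 (hg_nonneg t))).antitoneOn _,
    fun τ hτ => sub_add_integral_nonpos_of_hasDerivAt_le_neg hV hg_cont hdecay hτ.le⟩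

theorem stmt_18 (A : Matrix (Fin 3) (Fin 3) ℝ) (B C : Fin 3 → ℝ)
    (P : Matrix (Fin 3) (Fin 3) ℝ) (hPsymm : P.IsSymm) (hPpos : P.PosDef)
    (hLure : ∀ (x : Fin 3 → ℝ) (w : ℝ),
      x ⬝ᵥ (P *ᵥ (A *ᵥ x + w • B)) - (C ⬝ᵥ x) * w - (3/4) * (C ⬝ᵥ x) ^ 2 ≤ 0)
    (X : ℝ → Fin 3 → ℝ)
    (hX : ∀ i, ∀ t : ℝ, HasDerivAt (fun s => X s i)
      ((A *ᵥ X t + (1 - (1 + C ⬝ᵥ X t) ^ 3) • B) i) t) :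
    AntitoneOn (fun t => (1/2) * (X t ⬝ᵥ (P *ᵥ X t))) (Set.Ici 0) ∧
    ∀ τ : ℝ, 0 < τ →
      (1/2) * (X τ ⬝ᵥ (P *ᵥ X τ)) - (1/2) * (X 0 ⬝ᵥ (P *ᵥ X 0))
        + (∫ t in (0:ℝ)..τ, (C ⬝ᵥ X t) ^ 2 * (3/2 + C ⬝ᵥ X t) ^ 2) ≤ 0 :=
  stmt_18_general A B C P hPsymm hLure X hX
end
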